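/- If F is a generalized fighting fish and 0 ≤ i ≤ ℓ(F), then the i-augmentation ✠_i(F) is a generalized fighting fish. -/

import Mathlib

/-- The four-letter alphabet of steps. -/
inductive Letter : Type
  | E | N | W | S
deriving DecidableEq, Repr

open Letter

/-- Fighting fish: words obtainable from `ENWS` by upper, lower and double gluings. -/
inductive IsFF : List Letter → Prop
  | base : IsFF [E, N, W, S]
  | upper (u v : List Letter) :
      IsFF (u ++ [W] ++ v) → IsFF (u ++ [N, W, S] ++ v)
  | lower (u v : List Letter) :
      IsFF (u ++ [N] ++ v) → IsFF (u ++ [E, N, W] ++ v)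
  | double (u v : List Letter) :
      IsFF (u ++ [W, N] ++ v) → IsFF (u ++ [N, W] ++ v)

/-- Generalized fighting fish: words obtainable from the empty word by the
operations `∇_k` (replace `N^k` by `E N^k W`) and `△_k` (replace `W^k` by `N W^k S`),
for `k ≥ 0`. -/
inductive IsGFF : List Letter → Prop
  | base : IsGFF []
  | nabla (u v : List Letter) (k : ℕ) :
      IsGFF (u ++ List.replicate k N ++ v) →
      IsGFF (u ++ [E] ++ List.replicate k N ++ [W] ++ v)
  | delta (u v : List Letter) (k : ℕ) :
      IsGFF (u ++ List.replicate k W ++ v) →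
      IsGFF (u ++ [N] ++ List.replicate k W ++ [S] ++ v)

/-- The latitude of a word: number of `N`'s minus number of `S`'s. -/
def lat (w : List Letter) : ℤ := (w.count N : ℤ) - (w.count S : ℤ)

/-- The longitude of a word: number of `E`'s minus number of `W`'s. -/
def long (w : List Letter) : ℤ := (w.count E : ℤ) - (w.count W : ℤ)

/-- The size of a word: half its length. -/
def size (w : List Letter) : ℕ := w.length / 2

/-- The lengths of the nonempty prefixes of `w` with latitude 0, in increasing order. -/
def zeroPrefixLengths (w : List Letter) : List ℕ :=
  ((List.range w.length).map (· + 1)).filter (fun m => decide (lat (w.take m) = 0))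

/-- `ℓ(w)`: the number of nonempty prefixes of `w` (including `w` itself) with latitude 0. -/
def ell (w : List Letter) : ℕ := (zeroPrefixLengths w).length

/-- The length of the `i`-th shortest prefix of `w` with latitude 0
(the 0-th such prefix being the empty one). -/
def zeroPrefixLen (w : List Letter) (i : ℕ) : ℕ := (0 :: zeroPrefixLengths w).getD i 0

/-- The `i`-augmentation `✠_i(w)`: writing `w = G_i · H` where `G_i` is the `i`-th
shortest latitude-0 prefix of `w`, it is `G_i · N · H · S`. -/
def aug (w : List Letter) (i : ℕ) : List Letter :=
  w.take (zeroPrefixLen w i) ++ [Letter.N] ++ w.drop (zeroPrefixLen w i) ++ [Letter.S]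

/-- Concatenation of generalized fighting fish: `F1 ⊕ F2 = F1 · E · F2 · W`. -/
def oplus (w1 w2 : List Letter) : List Letter := w1 ++ [Letter.E] ++ w2 ++ [Letter.W]

/-!
Induct on the construction of `F`, locating the latitude-0 cut `A | B` relative to the factor
`E N^k W` or `N W^k S` produced by the last operation. If the cut lies before or after that
factor, augment the smaller fish at the corresponding cut and redo the operation. Since every
prefix of a generalized fighting fish has nonnegative latitude, a cut inside `E N^k` can only
fall right after the `E`, and then the new `N` is absorbed by `∇_{k+1}`; a cut inside `N W^k`
has positive latitude and cannot occur.
-/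

theorem List.append_eq_append_cons_replicate_append_cons {α : Type*} {A B u v : List α}
    {a b c : α} {k : ℕ} (h : A ++ B = u ++ a :: (List.replicate k c ++ b :: v)) :
    (∃ m, u = A ++ m ∧ B = m ++ a :: (List.replicate k c ++ b :: v)) ∨
    (∃ j ≤ k, A = u ++ a :: List.replicate j c ∧ B = List.replicate (k - j) c ++ b :: v) ∨
    (∃ m, A = u ++ a :: (List.replicate k c ++ b :: m) ∧ v = m ++ B) := by
  obtain ⟨m, rfl, rfl⟩ | ⟨_ | ⟨a', x⟩, rfl, hx⟩ := List.append_eq_append_iff.mp h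
  · exact .inl ⟨m, rfl, rfl⟩
  · exact .inl ⟨[], by simp, by simpa using hx.symm⟩
  obtain ⟨rfl, hrest⟩ := List.cons_eq_cons.mp (hx.trans (List.cons_append ..))
  obtain ⟨y, hrep, rfl⟩ | ⟨_ | ⟨b', m⟩, rfl, hy⟩ := List.append_eq_append_iff.mp hrest.symm
  · obtain ⟨hlen, hx, hy⟩ := List.replicate_eq_append_iff.mp hrep
    refine .inr (.inl ⟨x.length, by omega, hx ▸ rfl, ?_⟩)
    rw [hy, show y.length = k - x.length by omega]
  · exact .inr (.inl ⟨k, le_rfl, by simp, by simpa using hy.symm⟩)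
  · obtain ⟨rfl, rfl⟩ := List.cons_eq_cons.mp (hy.trans (List.cons_append ..))
    exact .inr (.inr ⟨m, by simp, rfl⟩)

@[simp] theorem lat_nil : lat [] = 0 := rfl

@[simp] theorem lat_append (w w' : List Letter) : lat (w ++ w') = lat w + lat w' := by
  simp only [lat, List.count_append]; push_cast; ring

@[simp] theorem lat_cons_E (w : List Letter) : lat (E :: w) = lat w := by simp [lat]
@[simp] theorem lat_cons_N (w : List Letter) : lat (N :: w) = lat w + 1 := by simp [lat]; ring
@[simp] theorem lat_cons_W (w : List Letter) : lat (W :: w) = lat w := by simp [lat]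
@[simp] theorem lat_cons_S (w : List Letter) : lat (S :: w) = lat w - 1 := by simp [lat]; ring

@[simp] theorem lat_replicate_N (k : ℕ) : lat (List.replicate k N) = k := by
  simp [lat, List.count_replicate]

@[simp] theorem lat_replicate_W (k : ℕ) : lat (List.replicate k W) = 0 := by
  simp [lat, List.count_replicate]

namespace IsGFF

theorem lat_nonneg {F : List Letter} (hF : IsGFF F) {A B : List Letter} (h : A ++ B = F) :
    0 ≤ lat A := by
  induction hF generalizing A B with
  | base => simp [List.append_eq_nil_iff.mp h]
  | nabla u v k _ ih =>
    simp only [List.append_assoc, List.singleton_append] at h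
    rcases List.append_eq_append_cons_replicate_append_cons h with
      ⟨m, rfl, rfl⟩ | ⟨j, -, rfl, rfl⟩ | ⟨m, rfl, rfl⟩
    · exact ih (B := m ++ List.replicate k N ++ v) (by simp)
    · have hu := ih (A := u) (B := List.replicate k N ++ v) (by simp)
      simp only [lat_append, lat_cons_E, lat_replicate_N]; omega
    · simpa using ih (A := u ++ List.replicate k N ++ m) (B := B) (by simp)
  | delta u v k _ ih =>
    simp only [List.append_assoc, List.singleton_append] at h
    rcases List.append_eq_append_cons_replicate_append_cons h with
      ⟨m, rfl, rfl⟩ | ⟨j, -, rfl, rfl⟩ | ⟨m, rfl, rfl⟩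
    · exact ih (B := m ++ List.replicate k W ++ v) (by simp)
    · have hu := ih (A := u) (B := List.replicate k W ++ v) (by simp)
      simp only [lat_append, lat_cons_N, lat_replicate_W]; omega
    · simpa using ih (A := u ++ List.replicate k W ++ m) (B := B) (by simp)

theorem augment {F : List Letter} (hF : IsGFF F) {A B : List Letter} (h : A ++ B = F)
    (hA : lat A = 0) : IsGFF (A ++ [N] ++ B ++ [S]) := by
  induction hF generalizing A B with
  | base =>
    obtain ⟨rfl, rfl⟩ := List.append_eq_nil_iff.mp h
    exact delta [] [] 0 base
  | nabla u v k hF ih =>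
    simp only [List.append_assoc, List.singleton_append] at h
    rcases List.append_eq_append_cons_replicate_append_cons h with
      ⟨m, rfl, rfl⟩ | ⟨j, -, rfl, rfl⟩ | ⟨m, rfl, rfl⟩
    · simpa using nabla (A ++ [N] ++ m) (v ++ [S]) k
        (by simpa using ih (B := m ++ List.replicate k N ++ v) (by simp) hA)
    · have hu := hF.lat_nonneg (A := u) (B := List.replicate k N ++ v) (by simp)
      obtain rfl : j = 0 := by
        simp only [lat_append, lat_cons_E, lat_replicate_N] at hA; omega
      have := ih (A := u) (B := List.replicate k N ++ v) (by simp) (by simpa using hA)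
      simpa [List.replicate_succ] using nabla u (v ++ [S]) (k + 1)
        (by simpa [List.replicate_succ] using this)
    · have := ih (A := u ++ List.replicate k N ++ m) (B := B) (by simp) (by simpa using hA)
      simpa using nabla u (m ++ [N] ++ B ++ [S]) k (by simpa using this)
  | delta u v k hF ih =>
    simp only [List.append_assoc, List.singleton_append] at h
    rcases List.append_eq_append_cons_replicate_append_cons h with
      ⟨m, rfl, rfl⟩ | ⟨j, -, rfl, rfl⟩ | ⟨m, rfl, rfl⟩
    · simpa using delta (A ++ [N] ++ m) (v ++ [S]) k
        (by simpa using ih (B := m ++ List.replicate k W ++ v) (by simp) hA)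
    · have hu := hF.lat_nonneg (A := u) (B := List.replicate k W ++ v) (by simp)
      simp only [lat_append, lat_cons_N, lat_replicate_W] at hA; omega
    · have := ih (A := u ++ List.replicate k W ++ m) (B := B) (by simp) (by simpa using hA)
      simpa using delta u (m ++ [N] ++ B ++ [S]) k (by simpa using this)

end IsGFF

theorem lat_take_zeroPrefixLen (w : List Letter) (i : ℕ) :
    lat (w.take (zeroPrefixLen w i)) = 0 := by
  rw [zeroPrefixLen, List.getD_eq_getElem?_getD]
  cases h : (0 :: zeroPrefixLengths w)[i]? with
  | none => simp
  | some m =>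
    rcases List.mem_cons.mp (List.mem_of_getElem? h) with rfl | hm
    · simp
    · simpa [zeroPrefixLengths] using (List.mem_filter.mp hm).2

theorem gff_aug_general (F : List Letter) (hF : IsGFF F) (i : ℕ) :
    IsGFF (aug F i) :=
  hF.augment (List.take_append_drop _ F) (lat_take_zeroPrefixLen F i)

/-- For a generalized fighting fish `F` and `0 ≤ i ≤ ℓ(F)`, the `i`-augmentation
`✠_i(F)` is a generalized fighting fish. -/
theorem gff_aug (F : List Letter) (hF : IsGFF F) (i : ℕ) (hi : i ≤ ell F) :
    IsGFF (aug F i) :=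
  gff_aug_general F hF i
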